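/- arXiv:2502.11173 — 2 statements merged into one kernel-verified Lean document; each statement's English description precedes it below -/
import Mathlib

section
/- Let θ, δ ∈ ℝ and set a = sin²(θ). Then |sin²(θ + δ) − sin²(θ)| ≤ 2|δ|·√(a(1 − a)) + δ². In particular, taking |δ| ≤ π/t for a positive integer t yields the error bound |ã − a| ≤ 2π√(a(1−a))/t + π²/t² of amplitude estimation with t iterations. -/
/-!
Since `sin² x − sin² y = sin (x + y) · sin (x − y)`, the error is
`sin (2θ + δ) · sin δ`. Expanding `sin (2θ + δ)` bounds its modulus by `|sin 2θ| + |δ|`,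
and `|sin 2θ| = 2 |sin θ cos θ| = 2 √(a (1 − a))`.
-/

open Real

theorem Real.sin_sq_sub_sin_sq (x y : ℝ) :
    sin x ^ 2 - sin y ^ 2 = sin (x + y) * sin (x - y) := by
  rw [sin_add, sin_sub]
  nlinarith [sin_sq_add_cos_sq x, sin_sq_add_cos_sq y]

theorem Real.abs_sin_add_le (x y : ℝ) : |sin (x + y)| ≤ |sin x| + |sin y| :=
  calc |sin (x + y)| = |sin x * cos y + cos x * sin y| := by rw [sin_add]
    _ ≤ |sin x| * |cos y| + |cos x| * |sin y| := by
        simpa only [abs_mul] using abs_add_le (sin x * cos y) (cos x * sin y)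
    _ ≤ |sin x| * 1 + 1 * |sin y| := by
        gcongr
        exacts [abs_cos_le_one y, abs_cos_le_one x]
    _ = |sin x| + |sin y| := by ring

theorem Real.abs_sin_two_mul (θ : ℝ) :
    |sin (2 * θ)| = 2 * √(sin θ ^ 2 * (1 - sin θ ^ 2)) := by
  have hsq : sin θ ^ 2 * (1 - sin θ ^ 2) = (sin θ * cos θ) ^ 2 := by
    rw [← cos_sq' θ]; ring
  rw [hsq, sqrt_sq_eq_abs, sin_two_mul, mul_assoc, abs_mul, abs_two]

theorem Real.abs_sin_sq_add_sub_sin_sq_le (θ δ : ℝ) :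
    |sin (θ + δ) ^ 2 - sin θ ^ 2| ≤ |δ| * (|sin (2 * θ)| + |δ|) :=
  calc |sin (θ + δ) ^ 2 - sin θ ^ 2| = |sin (2 * θ + δ)| * |sin δ| := by
        rw [sin_sq_sub_sin_sq, ← abs_mul]; ring_nf
    _ ≤ (|sin (2 * θ)| + |δ|) * |δ| := by
        have hsin : |sin δ| ≤ |δ| := abs_sin_le_abs
        exact mul_le_mul ((abs_sin_add_le _ _).trans (by linarith)) hsin
          (abs_nonneg _) (by positivity)
    _ = |δ| * (|sin (2 * θ)| + |δ|) := mul_comm _ _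

/-- Trigonometric perturbation bound behind the amplitude-estimation error
bound: for `a = sin² θ`, `|sin²(θ + δ) − sin² θ| ≤ 2|δ|√(a(1−a)) + δ²`; and
in particular, for a positive integer `t` and `|δ| ≤ π/t`, the amplitude
estimate `ã = sin²(θ + δ)` satisfies `|ã − a| ≤ 2π√(a(1−a))/t + π²/t²`. -/
theorem amplitude_estimation_error_bound (θ δ : ℝ) (a : ℝ) (ha : a = sin θ ^ 2) :
    |sin (θ + δ) ^ 2 - sin θ ^ 2| ≤ 2 * |δ| * Real.sqrt (a * (1 - a)) + δ ^ 2 ∧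
    (∀ t : ℕ, 0 < t → |δ| ≤ π / t →
      |sin (θ + δ) ^ 2 - a| ≤
        2 * π * Real.sqrt (a * (1 - a)) / t + π ^ 2 / t ^ 2) := by
  subst ha
  have key : |sin (θ + δ) ^ 2 - sin θ ^ 2| ≤
      2 * |δ| * √(sin θ ^ 2 * (1 - sin θ ^ 2)) + δ ^ 2 := by
    have h := abs_sin_sq_add_sub_sin_sq_le θ δ
    rw [abs_sin_two_mul] at h
    linarith [sq_abs δ]
  refine ⟨key, fun t ht hδ => key.trans ?_⟩
  have ht' : (0 : ℝ) < t := by exact_mod_cast ht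
  calc 2 * |δ| * √(sin θ ^ 2 * (1 - sin θ ^ 2)) + δ ^ 2
      = 2 * |δ| * √(sin θ ^ 2 * (1 - sin θ ^ 2)) + |δ| ^ 2 := by rw [sq_abs]
    _ ≤ 2 * (π / t) * √(sin θ ^ 2 * (1 - sin θ ^ 2)) + (π / t) ^ 2 := by gcongr
    _ = 2 * π * √(sin θ ^ 2 * (1 - sin θ ^ 2)) / t + π ^ 2 / t ^ 2 := by ring
end

section
/- Let e_1, …, e_k ∈ ℝ^d be orthonormal and let ē_1, …, ē_k ∈ ℝ^d be unit vectors with ‖ē_i − e_i‖₂ ≤ δ for all i, where δ ≥ 0. Then for every z ∈ ℝ^d, | ‖z − Σ_{i=1}^k ⟨ē_i, z⟩ ē_i‖ − ‖z − Σ_{i=1}^k ⟨e_i, z⟩ e_i‖ | ≤ k·δ·(2 + δ)·‖z‖. -/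
open scoped RealInnerProductSpace

/- The two reconstruction errors differ by at most the distance between the two projections, which
is bounded term by term: `⟪e, z⟫ e - ⟪ē, z⟫ ē = ⟪e - ē, z⟫ e + ⟪ē, z⟫ (e - ē)` has norm at most
`(‖e‖ + ‖ē‖) ‖e - ē‖ ‖z‖ ≤ (2 + δ) δ ‖z‖`, using `‖ē‖ ≤ ‖e‖ + δ = 1 + δ`. -/

section RankOne

variable {E : Type*} [NormedAddCommGroup E] [InnerProductSpace ℝ E]

lemma norm_inner_smul_sub_inner_smul_le (u v z : E) :
    ‖⟪u, z⟫ • u - ⟪v, z⟫ • v‖ ≤ (‖u‖ + ‖v‖) * ‖u - v‖ * ‖z‖ := by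
  have hsplit : ⟪u, z⟫ • u - ⟪v, z⟫ • v = ⟪u - v, z⟫ • u + ⟪v, z⟫ • (u - v) := by
    rw [inner_sub_left, sub_smul, smul_sub]
    abel
  calc ‖⟪u, z⟫ • u - ⟪v, z⟫ • v‖
      ≤ ‖⟪u - v, z⟫‖ * ‖u‖ + ‖⟪v, z⟫‖ * ‖u - v‖ := by
        rw [hsplit, ← norm_smul, ← norm_smul]
        exact norm_add_le _ _
    _ ≤ ‖u - v‖ * ‖z‖ * ‖u‖ + ‖v‖ * ‖z‖ * ‖u - v‖ := by
        gcongr <;> exact norm_inner_le_norm _ _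
    _ = (‖u‖ + ‖v‖) * ‖u - v‖ * ‖z‖ := by ring

lemma norm_sum_inner_smul_sub_sum_inner_smul_le {ι : Type*} (s : Finset ι) (u v : ι → E)
    (z : E) :
    ‖∑ i ∈ s, ⟪u i, z⟫ • u i - ∑ i ∈ s, ⟪v i, z⟫ • v i‖ ≤
      ∑ i ∈ s, (‖u i‖ + ‖v i‖) * ‖u i - v i‖ * ‖z‖ := by
  rw [← Finset.sum_sub_distrib]
  exact (norm_sum_le _ _).trans
    (Finset.sum_le_sum fun i _ => norm_inner_smul_sub_inner_smul_le (u i) (v i) z)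

end RankOne

theorem reconstruction_loss_perturbation_general
    (d k : ℕ) (e ebar : Fin k → EuclideanSpace ℝ (Fin d))
    (δ : ℝ)
    (horth : Orthonormal ℝ e)
    (hclose : ∀ i, ‖ebar i - e i‖ ≤ δ) :
    ∀ z : EuclideanSpace ℝ (Fin d),
      |‖z - (∑ i, ⟪ebar i, z⟫ • ebar i)‖ - ‖z - (∑ i, ⟪e i, z⟫ • e i)‖| ≤
        k * δ * (2 + δ) * ‖z‖ := by
  intro z
  have hterm : ∀ i, (‖e i‖ + ‖ebar i‖) * ‖e i - ebar i‖ ≤ (2 + δ) * δ := fun i => by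
    have hdist : ‖e i - ebar i‖ ≤ δ := norm_sub_rev (e i) (ebar i) ▸ hclose i
    have hbar : ‖ebar i‖ ≤ ‖e i‖ + ‖ebar i - e i‖ := norm_le_norm_add_norm_sub' _ _
    have hsum : ‖e i‖ + ‖ebar i‖ ≤ 2 + δ := by linarith [horth.1 i, hclose i]
    exact mul_le_mul hsum hdist (norm_nonneg _) (by linarith [norm_nonneg (ebar i), horth.1 i])
  calc |‖z - (∑ i, ⟪ebar i, z⟫ • ebar i)‖ - ‖z - (∑ i, ⟪e i, z⟫ • e i)‖|
      ≤ ‖∑ i, ⟪e i, z⟫ • e i - ∑ i, ⟪ebar i, z⟫ • ebar i‖ := by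
        simpa using abs_norm_sub_norm_le (z - ∑ i, ⟪ebar i, z⟫ • ebar i)
          (z - ∑ i, ⟪e i, z⟫ • e i)
    _ ≤ ∑ i, (‖e i‖ + ‖ebar i‖) * ‖e i - ebar i‖ * ‖z‖ :=
        norm_sum_inner_smul_sub_sum_inner_smul_le _ e ebar z
    _ ≤ ∑ _i : Fin k, (2 + δ) * δ * ‖z‖ :=
        Finset.sum_le_sum fun i _ => mul_le_mul_of_nonneg_right (hterm i) (norm_nonneg z)
    _ = k * δ * (2 + δ) * ‖z‖ := by
        rw [Finset.sum_const, Finset.card_univ, Fintype.card_fin, nsmul_eq_mul]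
        ring

/-- Perturbation of the reconstruction-loss anomaly score: if the orthonormal
principal components `eᵢ` are replaced by unit-norm estimates `ēᵢ` with
`‖ēᵢ − eᵢ‖ ≤ δ`, the reconstruction error changes by at most
`k·δ·(2 + δ)·‖z‖`. -/
theorem reconstruction_loss_perturbation
    (d k : ℕ) (e ebar : Fin k → EuclideanSpace ℝ (Fin d))
    (δ : ℝ) (hδ : 0 ≤ δ)
    (horth : Orthonormal ℝ e)
    (hunit : ∀ i, ‖ebar i‖ = 1)
    (hclose : ∀ i, ‖ebar i - e i‖ ≤ δ) :
    ∀ z : EuclideanSpace ℝ (Fin d),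
      |‖z - (∑ i, ⟪ebar i, z⟫ • ebar i)‖ - ‖z - (∑ i, ⟪e i, z⟫ • e i)‖| ≤
        k * δ * (2 + δ) * ‖z‖ :=
  reconstruction_loss_perturbation_general d k e ebar δ horth hclose
end
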